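/- Under the gluing setup, the dimer partition function factorizes through the cut: Σ_{M perfect matching of G} ∏_{e∈M} x_e = Σ_{A ⊆ C} Q1(A)·Q2(C∖A), where a perfect matching of G is a set of pairwise non-adjacent non-loop edges covering every vertex of V exactly once, and for j = 1,2 and A ⊆ C, Qj(A) = Σ ∏_{e∈Mj} x_e, the sum over all sets Mj ⊆ Ej of pairwise non-adjacent edges covering every vertex of Vj ∪ A exactly once and covering no vertex of C∖A. (This is Theorem 3.5 of the paper, the evaluation of the exterior-algebra pairing P_G(x) = ⟨P_{G1^{S′}}(z1), P_{G2^{S′}}(z2)⟩, where Gj^{S′} is obtained from Gj by attaching the core graph S′.) -/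

import Mathlib

/-!
Splitting along `E = E1 ⊔ E2`, a set of edges `M` is the same as a pair `(M ∩ E1, M ∩ E2)`,
and degrees add. An edge of `E1` never meets `V2` and an edge of `E2` never meets `V1`, so
`M1 ∪ M2` is a perfect matching iff `M1` covers `V1` exactly once, `M2` covers `V2` exactly once,
and every cut vertex is covered exactly once by exactly one of them. The set `A ⊆ C` of cut
vertices covered by `M1` is then forced, so every perfect matching is counted in exactly one
term `Q1(A) * Q2(C \ A)`.
-/

open Finset

/-- Degree of the vertex `v` in the graph `(V, F)`: each edge `e ∈ F` contributes `1` for each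
of its two (ordered) endpoints equal to `v`; in particular a loop at `v` contributes `2`.
A subset `M` is a perfect matching (a set of pairwise non-adjacent non-loop edges covering
every vertex exactly once) iff every vertex has degree `1` in `M`. -/
def degIn {V E : Type*} [DecidableEq V] (ends : E → V × V) (F : Finset E) (v : V) : ℕ :=
  ∑ e ∈ F, ((if (ends e).1 = v then 1 else 0) + (if (ends e).2 = v then 1 else 0))

namespace Finset

@[to_additive]
lemma prod_powerset_union {α β : Type*} [DecidableEq α] [CommMonoid β] {s t : Finset α}
    (h : Disjoint s t) (f : Finset α → β) :
    ∏ u ∈ (s ∪ t).powerset, f u = ∏ p ∈ s.powerset ×ˢ t.powerset, f (p.1 ∪ p.2) := by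
  refine prod_nbij' (fun u => (u ∩ s, u ∩ t)) (fun p => p.1 ∪ p.2) ?_ ?_ ?_ ?_ ?_
  · simp
  · simp only [mem_product, mem_powerset, and_imp, Prod.forall]
    exact fun _ _ h1 h2 => union_subset_union h1 h2
  · exact fun u hu => by rw [← inter_union_distrib_left, inter_eq_left.mpr (mem_powerset.mp hu)]
  · simp only [mem_product, mem_powerset, and_imp, Prod.forall, Prod.mk.injEq]
    intro u w hu hw
    simp [union_inter_distrib_right, inter_eq_left.mpr hu, inter_eq_left.mpr hw,
      disjoint_iff_inter_eq_empty.mp (h.mono_left hu),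
      disjoint_iff_inter_eq_empty.mp (h.symm.mono_left hw)]
  · exact fun u hu => by
      dsimp only
      rw [← inter_union_distrib_left, inter_eq_left.mpr (mem_powerset.mp hu)]

end Finset

section Gluing

variable {V E : Type*} [DecidableEq V] (ends : E → V × V)

lemma degIn_union [DecidableEq E] {M1 M2 : Finset E} (h : Disjoint M1 M2) (v : V) :
    degIn ends (M1 ∪ M2) v = degIn ends M1 v + degIn ends M2 v :=
  sum_union h

lemma degIn_eq_zero_of_notMem {W : Finset V} {M : Finset E}
    (hM : ∀ e ∈ M, (ends e).1 ∈ W ∧ (ends e).2 ∈ W) {v : V} (hv : v ∉ W) :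
    degIn ends M v = 0 :=
  sum_eq_zero fun e he => by
    simp [show (ends e).1 ≠ v from fun h => hv (h ▸ (hM e he).1),
      show (ends e).2 ≠ v from fun h => hv (h ▸ (hM e he).2)]

lemma forall_add_eq_one_iff {C A : Finset V} (hA : A ⊆ C) (f g : V → ℕ) :
    ((∀ v ∈ A, f v = 1) ∧ ∀ v ∈ C \ A, f v = 0) ∧
        ((∀ v ∈ C \ A, g v = 1) ∧ ∀ v ∈ C \ (C \ A), g v = 0) ↔
      (∀ v ∈ C, f v + g v = 1) ∧ A = C.filter (f · = 1) := by
  rw [Finset.sdiff_sdiff_eq_self hA]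
  constructor
  · rintro ⟨⟨hfA, hfC⟩, hgC, hgA⟩
    refine ⟨fun v hv => ?_, ?_⟩
    · by_cases hvA : v ∈ A
      · rw [hfA v hvA, hgA v hvA]
      · rw [hfC v (mem_sdiff.mpr ⟨hv, hvA⟩), hgC v (mem_sdiff.mpr ⟨hv, hvA⟩)]
    · ext v
      simp only [mem_filter]
      refine ⟨fun hvA => ⟨hA hvA, hfA v hvA⟩, fun ⟨hv, hfv⟩ => ?_⟩
      by_contra hvA
      simp [hfC v (mem_sdiff.mpr ⟨hv, hvA⟩)] at hfv
  · rintro ⟨hsum, rfl⟩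
    simp only [mem_sdiff, mem_filter, not_and]
    refine ⟨⟨fun v hv => hv.2, fun v hv => ?_⟩, fun v hv => ?_, fun v hv => ?_⟩ <;>
      have := hsum v hv.1
    · have := hv.2 hv.1; omega
    · have := hv.2 hv.1; omega
    · omega

variable [Fintype V] [DecidableEq E] {V1 V2 C : Finset V} {E1 E2 : Finset E} {M1 M2 : Finset E}

lemma forall_degIn_union_eq_one_iff (hd12 : Disjoint V1 V2) (hd1C : Disjoint V1 C)
    (hd2C : Disjoint V2 C) (hVunion : V1 ∪ V2 ∪ C = univ) (hM : Disjoint M1 M2)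
    (hM1 : ∀ e ∈ M1, (ends e).1 ∈ V1 ∪ C ∧ (ends e).2 ∈ V1 ∪ C)
    (hM2 : ∀ e ∈ M2, (ends e).1 ∈ V2 ∪ C ∧ (ends e).2 ∈ V2 ∪ C) :
    (∀ v, degIn ends (M1 ∪ M2) v = 1) ↔
      (∀ v ∈ V1, degIn ends M1 v = 1) ∧ (∀ v ∈ V2, degIn ends M2 v = 1) ∧
        ∀ v ∈ C, degIn ends M1 v + degIn ends M2 v = 1 := by
  have h1 : ∀ v ∈ V2, degIn ends M1 v = 0 := fun v hv => degIn_eq_zero_of_notMem ends hM1 <| by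
    simp [disjoint_right.mp hd12 hv, disjoint_left.mp hd2C hv]
  have h2 : ∀ v ∈ V1, degIn ends M2 v = 0 := fun v hv => degIn_eq_zero_of_notMem ends hM2 <| by
    simp [disjoint_left.mp hd12 hv, disjoint_left.mp hd1C hv]
  simp only [degIn_union ends hM]
  constructor
  · intro h
    exact ⟨fun v hv => by simpa [h2 v hv] using h v, fun v hv => by simpa [h1 v hv] using h v,
      fun v _ => h v⟩
  · rintro ⟨hV1, hV2, hC⟩ v
    have hv : v ∈ V1 ∪ V2 ∪ C := hVunion ▸ mem_univ v
    rcases mem_union.mp hv with hv | hv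
    · rcases mem_union.mp hv with hv | hv
      · rw [hV1 v hv, h2 v hv]
      · rw [h1 v hv, hV2 v hv]
    · exact hC v hv

lemma sides_iff_forall_degIn_union_eq_one (hd12 : Disjoint V1 V2) (hd1C : Disjoint V1 C)
    (hd2C : Disjoint V2 C) (hVunion : V1 ∪ V2 ∪ C = univ) (hdE : Disjoint E1 E2)
    (hE1 : ∀ e ∈ E1, (ends e).1 ∈ V1 ∪ C ∧ (ends e).2 ∈ V1 ∪ C)
    (hE2 : ∀ e ∈ E2, (ends e).1 ∈ V2 ∪ C ∧ (ends e).2 ∈ V2 ∪ C)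
    (hM1 : M1 ⊆ E1) (hM2 : M2 ⊆ E2) {A : Finset V} (hA : A ⊆ C) :
    ((∀ v ∈ V1, degIn ends M1 v = 1) ∧ (∀ v ∈ A, degIn ends M1 v = 1) ∧
        ∀ v ∈ C \ A, degIn ends M1 v = 0) ∧
      ((∀ v ∈ V2, degIn ends M2 v = 1) ∧ (∀ v ∈ C \ A, degIn ends M2 v = 1) ∧
        ∀ v ∈ C \ (C \ A), degIn ends M2 v = 0) ↔
      (∀ v, degIn ends (M1 ∪ M2) v = 1) ∧ A = C.filter (degIn ends M1 · = 1) := by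
  have := forall_add_eq_one_iff hA (degIn ends M1) (degIn ends M2)
  rw [forall_degIn_union_eq_one_iff ends hd12 hd1C hd2C hVunion (hdE.mono hM1 hM2)
    (fun e he => hE1 e (hM1 he)) (fun e he => hE2 e (hM2 he))]
  tauto

end Gluing

open scoped Classical in
theorem dimer_gluing_general {V E : Type*} [Fintype V] [DecidableEq V]
    [Fintype E] [DecidableEq E] {R : Type*} [CommRing R]
    (V1 V2 C : Finset V)
    (hd12 : Disjoint V1 V2) (hd1C : Disjoint V1 C) (hd2C : Disjoint V2 C)
    (hVunion : V1 ∪ V2 ∪ C = Finset.univ)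
    (E1 E2 : Finset E) (hdE : Disjoint E1 E2) (hEunion : E1 ∪ E2 = Finset.univ)
    (ends : E → V × V)
    (hE1 : ∀ e ∈ E1, (ends e).1 ∈ V1 ∪ C ∧ (ends e).2 ∈ V1 ∪ C)
    (hE2 : ∀ e ∈ E2, (ends e).1 ∈ V2 ∪ C ∧ (ends e).2 ∈ V2 ∪ C)
    (x : E → R) :
    (∑ M ∈ Finset.univ.powerset.filter (fun M : Finset E => ∀ v : V, degIn ends M v = 1),
        ∏ e ∈ M, x e) =
      ∑ A ∈ C.powerset,
        (∑ M ∈ E1.powerset.filter (fun M : Finset E =>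
            (∀ v ∈ V1, degIn ends M v = 1) ∧ (∀ v ∈ A, degIn ends M v = 1) ∧
              ∀ v ∈ C \ A, degIn ends M v = 0),
          ∏ e ∈ M, x e) *
        ∑ M ∈ E2.powerset.filter (fun M : Finset E =>
            (∀ v ∈ V2, degIn ends M v = 1) ∧ (∀ v ∈ C \ A, degIn ends M v = 1) ∧
              ∀ v ∈ C \ (C \ A), degIn ends M v = 0),
          ∏ e ∈ M, x e := by
  rw [sum_filter, ← hEunion, sum_powerset_union hdE]
  simp_rw [sum_mul_sum, ← sum_product', ← filter_product, sum_filter]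
  rw [sum_comm]
  refine sum_congr rfl fun p hp => ?_
  obtain ⟨hM1, hM2⟩ : p.1 ⊆ E1 ∧ p.2 ⊆ E2 := by simpa using hp
  rw [sum_congr rfl fun A hA => if_congr (sides_iff_forall_degIn_union_eq_one ends hd12 hd1C hd2C
    hVunion hdE hE1 hE2 hM1 hM2 (mem_powerset.mp hA)) rfl rfl]
  simp [ite_and, prod_union (hdE.mono hM1 hM2)]

open scoped Classical in
/-- Theorem 3.5 of the paper: under the gluing setup, the dimer partition
function factorizes through the cut:
`Σ_{M perfect matching of G} ∏_{e∈M} x_e = Σ_{A ⊆ C} Q1(A)·Q2(C∖A)`, where `Qj(A)` sums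
`∏_{e∈Mj} x_e` over the matchings `Mj ⊆ Ej` covering every vertex of `Vj ∪ A` exactly once
and covering no vertex of `C∖A`. -/
theorem dimer_gluing {V E : Type*} [Fintype V] [DecidableEq V]
    [Fintype E] [DecidableEq E] {R : Type*} [CommRing R]
    (V1 V2 C : Finset V)
    (hd12 : Disjoint V1 V2) (hd1C : Disjoint V1 C) (hd2C : Disjoint V2 C)
    (hVunion : V1 ∪ V2 ∪ C = Finset.univ)
    (hCeven : Even C.card) (hV1even : Even V1.card) (hV2even : Even V2.card)
    (E1 E2 : Finset E) (hdE : Disjoint E1 E2) (hEunion : E1 ∪ E2 = Finset.univ)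
    (ends : E → V × V)
    (hE1 : ∀ e ∈ E1, (ends e).1 ∈ V1 ∪ C ∧ (ends e).2 ∈ V1 ∪ C)
    (hE2 : ∀ e ∈ E2, (ends e).1 ∈ V2 ∪ C ∧ (ends e).2 ∈ V2 ∪ C)
    (x : E → R) :
    (∑ M ∈ Finset.univ.powerset.filter (fun M : Finset E => ∀ v : V, degIn ends M v = 1),
        ∏ e ∈ M, x e) =
      ∑ A ∈ C.powerset,
        (∑ M ∈ E1.powerset.filter (fun M : Finset E =>
            (∀ v ∈ V1, degIn ends M v = 1) ∧ (∀ v ∈ A, degIn ends M v = 1) ∧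
              ∀ v ∈ C \ A, degIn ends M v = 0),
          ∏ e ∈ M, x e) *
        ∑ M ∈ E2.powerset.filter (fun M : Finset E =>
            (∀ v ∈ V2, degIn ends M v = 1) ∧ (∀ v ∈ C \ A, degIn ends M v = 1) ∧
              ∀ v ∈ C \ (C \ A), degIn ends M v = 0),
          ∏ e ∈ M, x e :=
  dimer_gluing_general V1 V2 C hd12 hd1C hd2C hVunion E1 E2 hdE hEunion ends hE1 hE2 x
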